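/- arXiv:2605.09010 — 2 statements merged into one kernel-verified Lean document; each statement's English description precedes it below -/
import Mathlib

section
/- There exists a self-divisible ultrafilter u on ℕ such that u/u is not self-divisible; in fact D(u/u) = {1} for any ultrafilter u containing the set S of squarefree numbers and containing pℕ \ p²ℕ for every prime p. -/
/-- x·A = {x*a : a ∈ A} in ℕ+. -/
def pmul (x : ℕ+) (A : Set ℕ+) : Set ℕ+ := (x * ·) '' A

/-- xℕ, the set of positive multiples of x. -/
def mulsOf (x : ℕ+) : Set ℕ+ := {n | x ∣ n}

/-- D(u) = {x : xℕ ∈ u}. -/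
def Dset (u : Ultrafilter ℕ+) : Set ℕ+ := {x | mulsOf x ∈ u}

/-- v strongly divides u: D(u) ∈ v. -/
def SDvd (v u : Ultrafilter ℕ+) : Prop := Dset u ∈ v

/-- Membership in the quotient u/v:  A ∈ u/v iff {x : x·A ∈ u} ∈ v. -/
def quotMem (u v : Ultrafilter ℕ+) (A : Set ℕ+) : Prop := {x | pmul x A ∈ u} ∈ v

attribute [local instance] Ultrafilter.mul

/-- D(u/u) = {x : xℕ ∈ u/u}. -/
def DsetQ (u : Ultrafilter ℕ+) : Set ℕ+ := {x | quotMem u u (mulsOf x)}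

/-! For squarefree `x`, the set `xℕ` is the intersection of the finitely many `pℕ` with `p ∣ x`; so
once `u` contains every `pℕ`, all squarefree numbers lie in `D(u)`, and `S ∈ u` makes `u`
self-divisible. Conversely, when `S ∈ u` every element of `D(u)` divides a squarefree number and is
squarefree. If `x ∈ D(u/u)` and a prime `p` divides `x`, some `y ∈ pℕ` has `yx ∈ D(u)`, impossible
as `p² ∣ yx`: so `D(u/u) = {1}`, and `{1} ∉ u/u` because `u` is non-principal. Primorials are
squarefree and eventually divisible by each prime, so an ultrafilter refining their image under
`atTop` has all these properties. -/

open Filter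

lemma mem_mulsOf_iff {x n : ℕ+} : n ∈ mulsOf x ↔ (x : ℕ) ∣ n := PNat.dvd_iff

lemma pmul_mulsOf (x y : ℕ+) : pmul x (mulsOf y) = mulsOf (x * y) := by
  ext n
  constructor
  · rintro ⟨m, ⟨k, rfl⟩, rfl⟩
    exact ⟨k, (mul_assoc x y k).symm⟩
  · rintro ⟨k, rfl⟩
    exact ⟨y * k, ⟨k, rfl⟩, (mul_assoc x y k).symm⟩

lemma mem_DsetQ_iff {u : Ultrafilter ℕ+} {x : ℕ+} :
    x ∈ DsetQ u ↔ {y | mulsOf (y * x) ∈ u} ∈ u := by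
  simp only [DsetQ, quotMem, pmul_mulsOf]
  rfl

lemma one_mem_DsetQ_iff {u : Ultrafilter ℕ+} : 1 ∈ DsetQ u ↔ Dset u ∈ u := by
  simp only [mem_DsetQ_iff, mul_one, Dset]

lemma quotMem_singleton_one_iff {u v : Ultrafilter ℕ+} :
    quotMem u v {1} ↔ {x | {x} ∈ u} ∈ v := by
  simp only [quotMem, pmul, Set.image_singleton, mul_one]

lemma mulsOf_mem_of_squarefree {f : Filter ℕ+} (hf : ∀ p : ℕ+, (p : ℕ).Prime → mulsOf p ∈ f)
    {x : ℕ+} (hx : Squarefree (x : ℕ)) : mulsOf x ∈ f := by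
  have hprimes : ∀ p ∈ (x : ℕ).primeFactors, {n : ℕ+ | p ∣ n} ∈ f := fun p hp => by
    have hp := Nat.prime_of_mem_primeFactors hp
    exact mem_of_superset (hf ⟨p, hp.pos⟩ hp) fun _ => mem_mulsOf_iff.1
  refine mem_of_superset ((biInter_finset_mem _).2 hprimes) fun n hn => ?_
  rw [mem_mulsOf_iff, ← Nat.prod_primeFactors_of_squarefree hx]
  exact Finset.prod_primes_dvd _ (fun p hp => (Nat.prime_of_mem_primeFactors hp).prime)
    (by simpa using hn)

lemma squarefree_of_mulsOf_mem {f : Filter ℕ+} [f.NeBot]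
    (hS : {x : ℕ+ | Squarefree (x : ℕ)} ∈ f) {x : ℕ+} (hx : mulsOf x ∈ f) :
    Squarefree (x : ℕ) := by
  obtain ⟨n, hxn, hn⟩ := nonempty_of_mem (inter_mem hx hS)
  exact hn.squarefree_of_dvd (mem_mulsOf_iff.1 hxn)

lemma singleton_notMem_of_mulsOf_mem {f : Filter ℕ+} [f.NeBot]
    (hf : ∀ p : ℕ+, (p : ℕ).Prime → mulsOf p ∈ f) (x : ℕ+) : {x} ∉ f := by
  intro hx
  obtain ⟨p, hxp, hp⟩ := Nat.exists_infinite_primes ((x : ℕ) + 1)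
  obtain ⟨n, rfl, hpn⟩ := nonempty_of_mem (inter_mem hx (hf ⟨p, hp.pos⟩ hp))
  have : p ≤ n := Nat.le_of_dvd n.pos (mem_mulsOf_iff.1 hpn)
  omega

lemma Dset_mem_of_squarefree_mem {u : Ultrafilter ℕ+} (hS : {x : ℕ+ | Squarefree (x : ℕ)} ∈ u)
    (hP : ∀ p : ℕ+, (p : ℕ).Prime → mulsOf p ∈ u) : Dset u ∈ u :=
  mem_of_superset hS fun _ => mulsOf_mem_of_squarefree hP

lemma DsetQ_eq_singleton_one {u : Ultrafilter ℕ+} (hS : {x : ℕ+ | Squarefree (x : ℕ)} ∈ u)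
    (hP : ∀ p : ℕ+, (p : ℕ).Prime → mulsOf p ∈ u) : DsetQ u = {1} := by
  ext x
  rw [Set.mem_singleton_iff]
  refine ⟨fun hx => ?_, fun hx => hx ▸ one_mem_DsetQ_iff.2 (Dset_mem_of_squarefree_mem hS hP)⟩
  by_contra hx1
  obtain ⟨p, hp, hpx⟩ := Nat.exists_prime_and_dvd (PNat.coe_eq_one_iff.not.2 hx1)
  obtain ⟨y, hyx, hpy⟩ :=
    nonempty_of_mem (inter_mem (mem_DsetQ_iff.1 hx) (hP ⟨p, hp.pos⟩ hp))
  have hsq : Squarefree ((y * x : ℕ+) : ℕ) := squarefree_of_mulsOf_mem hS hyx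
  rw [PNat.mul_coe] at hsq
  exact Nat.squarefree_iff_prime_squarefree.1 hsq p hp
    (mul_dvd_mul (mem_mulsOf_iff.1 hpy) hpx)

lemma exists_ultrafilter_squarefree_mem_mulsOf_prime_mem :
    ∃ u : Ultrafilter ℕ+, {x : ℕ+ | Squarefree (x : ℕ)} ∈ u ∧
      ∀ p : ℕ+, (p : ℕ).Prime → mulsOf p ∈ u := by
  let primorial' : ℕ → ℕ+ := fun n => ⟨primorial n, primorial_pos n⟩
  refine ⟨.of (map primorial' atTop), Ultrafilter.of_le _ ?_, fun p hp => Ultrafilter.of_le _ ?_⟩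
  · exact mem_map.2 (univ_mem' squarefree_primorial)
  · exact mem_map.2 (mem_atTop_sets.2 ⟨p, fun _ hn => mem_mulsOf_iff.2 (hp.dvd_primorial_iff.2 hn)⟩)

theorem stmt10 :
    (∃ u : Ultrafilter ℕ+, Dset u ∈ u ∧ ¬ quotMem u u (DsetQ u)) ∧
    (∀ u : Ultrafilter ℕ+, {x : ℕ+ | Squarefree (x : ℕ)} ∈ u →
      (∀ p : ℕ+, (p : ℕ).Prime → {n : ℕ+ | p ∣ n ∧ ¬ p ^ 2 ∣ n} ∈ u) →
      DsetQ u = {1}) := by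
  refine ⟨?_, fun u hS hA =>
    DsetQ_eq_singleton_one hS fun p hp => mem_of_superset (hA p hp) fun _ hn => hn.1⟩
  obtain ⟨u, hS, hP⟩ := exists_ultrafilter_squarefree_mem_mulsOf_prime_mem
  refine ⟨u, Dset_mem_of_squarefree_mem hS hP, ?_⟩
  rw [DsetQ_eq_singleton_one hS hP, quotMem_singleton_one_iff]
  have hno_singletons : {x : ℕ+ | {x} ∈ u} = ∅ :=
    Set.eq_empty_of_forall_notMem (singleton_notMem_of_mulsOf_mem hP)
  exact hno_singletons ▸ u.empty_notMem
end

section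
/- Let u be a self-divisible ultrafilter on ℕ. Then for every ultrafilter v, v strongly divides u if and only if v strongly divides u·(u/u). Equivalently, D(u) = D(u·(u/u)). -/
attribute [local instance] Ultrafilter.mul

/-!
`D(u) ⊆ D(u·w)` holds for every `w`, since `x ∣ a` implies `x ∣ a * b`. Conversely, if
`xℕ ∈ u·(u/u)`, then `u`-many `a` have `B = {b : x ∣ a * b} ∈ u/u`; as `D(u) ∈ u` we may take such
an `a ∈ D(u)`, and then `aℕ ∈ u` meets `{y : y·B ∈ u} ∈ u` in some `y`. Writing `y = a * c`, every
element `a * c * b` of `y·B` is a multiple of `x`, so `xℕ ∈ u`.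
-/

theorem mulsOf_mem_mul_iff (x : ℕ+) (u w : Ultrafilter ℕ+) :
    mulsOf x ∈ u * w ↔ ∀ᶠ a in (u : Filter ℕ+), ∀ᶠ b in (w : Filter ℕ+), x ∣ a * b :=
  Ultrafilter.eventually_mul u w (x ∣ ·)

theorem Dset_subset_Dset_mul (u w : Ultrafilter ℕ+) : Dset u ⊆ Dset (u * w) := fun x hx =>
  (mulsOf_mem_mul_iff x u w).2 <| Filter.mem_of_superset hx fun _ ha =>
    Filter.Eventually.of_forall fun b => ha.mul_right b

theorem pmul_subset_mulsOf {x a y : ℕ+} (hay : a ∣ y) :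
    pmul y {b | x ∣ a * b} ⊆ mulsOf x := by
  rintro _ ⟨b, hb, rfl⟩
  obtain ⟨c, rfl⟩ := hay
  exact hb.trans ⟨c, by ring⟩

theorem mulsOf_mem_of_quotMem {u v : Ultrafilter ℕ+} {x a : ℕ+} (ha : mulsOf a ∈ v)
    (hquot : quotMem u v {b | x ∣ a * b}) : mulsOf x ∈ u := by
  obtain ⟨y, hay, hy⟩ := Filter.nonempty_of_mem (Filter.inter_mem ha hquot)
  exact Filter.mem_of_superset hy (pmul_subset_mulsOf hay)

theorem Dset_mul_subset_of_le_quot {u q : Ultrafilter ℕ+} (hu : Dset u ∈ u)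
    (hq : ∀ A ∈ q, quotMem u u A) : Dset (u * q) ⊆ Dset u := by
  intro x hx
  have hgood : ∀ᶠ a in (u : Filter ℕ+), {b | x ∣ a * b} ∈ q := (mulsOf_mem_mul_iff x u q).1 hx
  obtain ⟨a, haD, haq⟩ := Filter.nonempty_of_mem (Filter.inter_mem hu hgood)
  exact mulsOf_mem_of_quotMem haD (hq _ haq)

theorem stmt12 (u : Ultrafilter ℕ+) (hu : Dset u ∈ u)
    (q : Ultrafilter ℕ+) (hq : ∀ A : Set ℕ+, A ∈ q ↔ quotMem u u A) :
    (∀ v : Ultrafilter ℕ+, Dset u ∈ v ↔ Dset (u * q) ∈ v) ∧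
      Dset u = Dset (u * q) := by
  have hD : Dset u = Dset (u * q) :=
    (Dset_subset_Dset_mul u q).antisymm (Dset_mul_subset_of_le_quot hu fun A => (hq A).1)
  exact ⟨fun v => by rw [hD], hD⟩
end
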